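/- Let (Φ_t)_{t≥0} be a continuous one-parameter semigroup on the right half-plane Π with Denjoy–Wolff point at ∞, generated by −φ, where φ has no zeros in Π and admits the representation φ(w) = β + ϱ(w) with β ∈ ℂ and ϱ(w) → 0 as |w| → ∞, w ∈ Π. Let σ be the holomorphic function with σ'(w) = 1/φ(w), σ(1) = 0. Then for every w ∈ Π, lim_{t→∞} ( Φ_t(w) − Φ_t(1) ) = β·σ(w). -/

import Mathlib

open Complex Filter Topology Set MeasureTheory

noncomputable section

/-- The right half-plane in the complex plane. -/
def rightHalfPlane : Set ℂ := {w : ℂ | 0 < w.re}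

/-- A continuous one-parameter semigroup `Φ` on the right half-plane generated by `-φ`,
where `Re φ ≥ 0`: each `Φ t` is a holomorphic self-map of the half-plane, `Φ 0 = id`,
`Φ (t+s) = Φ t ∘ Φ s`, and for each `w` the trajectory `t ↦ Φ t w` solves
`∂Φ_t(w)/∂t = φ(Φ_t(w))`. -/
structure IsContinuousSemigroupOnHalfPlane (Φ : ℝ → ℂ → ℂ) (φ : ℂ → ℂ) : Prop where
  mapsTo : ∀ t : ℝ, 0 ≤ t → Set.MapsTo (Φ t) rightHalfPlane rightHalfPlane
  holomorphic : ∀ t : ℝ, 0 ≤ t → DifferentiableOn ℂ (Φ t) rightHalfPlane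
  init : ∀ w ∈ rightHalfPlane, Φ 0 w = w
  semigroup : ∀ t s : ℝ, 0 ≤ t → 0 ≤ s → ∀ w ∈ rightHalfPlane, Φ (t + s) w = Φ t (Φ s w)
  gen_holomorphic : DifferentiableOn ℂ φ rightHalfPlane
  gen_re_nonneg : ∀ w ∈ rightHalfPlane, 0 ≤ (φ w).re
  ode : ∀ w ∈ rightHalfPlane, ∀ t : ℝ, 0 ≤ t →
    HasDerivWithinAt (fun s : ℝ => Φ s w) (φ (Φ t w)) (Set.Ici (0 : ℝ)) t

/-- The semigroup has Denjoy–Wolff point at `∞`. -/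
def HasDWPointInfty (Φ : ℝ → ℂ → ℂ) : Prop :=
  ∀ w ∈ rightHalfPlane, Tendsto (fun t : ℝ => ‖Φ t w‖) atTop atTop

/-- The filter of neighbourhoods of `∞` within a set `S ⊆ ℂ`:
`|w| → ∞` with `w ∈ S`. -/
def atInftyWithin (S : Set ℂ) : Filter ℂ :=
  Filter.comap (fun w : ℂ => ‖w‖) Filter.atTop ⊓ Filter.principal S

/-- `σ` solves `σ' = 1/φ` on the right half-plane with `σ 1 = 0`. -/
def IsSigmaFunction (φ σ : ℂ → ℂ) : Prop :=
  (∀ w ∈ rightHalfPlane, HasDerivAt σ (1 / φ w) w) ∧ σ 1 = 0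

open ComplexConjugate

/-!
Since `σ' = 1/φ` and the trajectories solve `ż = φ(z)`, `σ (Φ_t z) = σ z + t`. Hence, with
`a = Φ_t 1` and `b = Φ_t w`, `σ w = σ b - σ a = (b - a) I_t`, where `I_t` is the mean of `1/φ`
over the segment `[a, b]`. By Schwarz–Pick, `b` lies in the pseudo-hyperbolic disc about `a` of
radius `k = ρ(w, 1) < 1`; this disc is a Euclidean disc, so it contains the segment, and since
`|a| → ∞` the segment tends to `∞` uniformly. If `β ≠ 0` this gives `I_t → 1/β`. If `β = 0`, then
`Re φ > 0` by the open mapping theorem, so `1/φ` is a self-map of `Π`; Schwarz–Pick keeps its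
values on the segment, hence also their mean `I_t`, in a pseudo-hyperbolic disc about `1/φ(a)`,
which forces `|I_t| ≥ c |1/φ(a)| → ∞`. Either way `b - a = σ w / I_t → β σ w`.
-/

lemma isOpen_rightHalfPlane : IsOpen rightHalfPlane :=
  isOpen_lt continuous_const continuous_re

lemma convex_rightHalfPlane : Convex ℝ rightHalfPlane :=
  convex_halfSpace_re_gt 0

lemma one_mem_rightHalfPlane : (1 : ℂ) ∈ rightHalfPlane := by
  simp [rightHalfPlane]

lemma re_add_conj_pos {z ζ : ℂ} (hz : z ∈ rightHalfPlane) (hζ : ζ ∈ rightHalfPlane) :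
    0 < (z + conj ζ).re := by
  simpa using add_pos hz hζ

lemma add_conj_ne_zero {z ζ : ℂ} (hz : z ∈ rightHalfPlane) (hζ : ζ ∈ rightHalfPlane) :
    z + conj ζ ≠ 0 := fun h => by simpa [h] using re_add_conj_pos hz hζ

lemma norm_sub_lt_norm_add_conj {z ζ : ℂ} (hz : z ∈ rightHalfPlane) (hζ : ζ ∈ rightHalfPlane) :
    ‖z - ζ‖ < ‖z + conj ζ‖ := by
  have hz' : 0 < z.re := hz
  have hζ' : 0 < ζ.re := hζ
  refine lt_of_pow_lt_pow_left₀ 2 (norm_nonneg _) ?_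
  simp only [Complex.sq_norm, normSq_apply, sub_re, sub_im, add_re, add_im, conj_re, conj_im]
  nlinarith [mul_pos hz' hζ']

def halfPlaneToDisc (ζ z : ℂ) : ℂ := (z - ζ) / (z + conj ζ)

def discToHalfPlane (ζ u : ℂ) : ℂ := (ζ + u * conj ζ) / (1 - u)

lemma halfPlaneToDisc_mapsTo {ζ : ℂ} (hζ : ζ ∈ rightHalfPlane) :
    MapsTo (halfPlaneToDisc ζ) rightHalfPlane (Metric.ball 0 1) := fun z hz => by
  rw [mem_ball_zero_iff, halfPlaneToDisc, norm_div,
    div_lt_one (norm_pos_iff.2 (add_conj_ne_zero hz hζ))]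
  exact norm_sub_lt_norm_add_conj hz hζ

lemma discToHalfPlane_mapsTo {ζ : ℂ} (hζ : ζ ∈ rightHalfPlane) :
    MapsTo (discToHalfPlane ζ) (Metric.ball 0 1) rightHalfPlane := fun u hu => by
  have hu1 : normSq u < 1 := by
    rw [normSq_eq_norm_sq]; nlinarith [mem_ball_zero_iff.1 hu, norm_nonneg u]
  have hne : 1 - u ≠ 0 := fun h => by simp [← sub_eq_zero.1 h] at hu1
  have hζ' : 0 < ζ.re := hζ
  have key : (ζ + u * conj ζ).re * (1 - u).re + (ζ + u * conj ζ).im * (1 - u).im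
      = ζ.re * (1 - normSq u) := by
    simp only [normSq_apply, add_re, add_im, mul_re, mul_im, sub_re, sub_im, conj_re, conj_im,
      one_re, one_im]
    ring
  show 0 < (discToHalfPlane ζ u).re
  rw [discToHalfPlane, div_re, ← add_div, key]
  exact div_pos (mul_pos hζ' (by linarith)) (normSq_pos.2 hne)

lemma discToHalfPlane_halfPlaneToDisc {ζ z : ℂ} (hζ : ζ ∈ rightHalfPlane)
    (hz : z ∈ rightHalfPlane) : discToHalfPlane ζ (halfPlaneToDisc ζ z) = z := by
  have h₁ := add_conj_ne_zero hz hζ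
  have h₂ := add_conj_ne_zero hζ hζ
  rw [discToHalfPlane, halfPlaneToDisc, div_eq_iff]
  · field_simp; ring
  · rw [one_sub_div h₁]; exact div_ne_zero (by convert h₂ using 1; ring) h₁

lemma differentiableOn_halfPlaneToDisc {ζ : ℂ} (hζ : ζ ∈ rightHalfPlane) :
    DifferentiableOn ℂ (halfPlaneToDisc ζ) rightHalfPlane :=
  .div (by fun_prop) (by fun_prop) fun _ hz => add_conj_ne_zero hz hζ

lemma differentiableOn_discToHalfPlane (ζ : ℂ) :
    DifferentiableOn ℂ (discToHalfPlane ζ) (Metric.ball 0 1) :=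
  .div (by fun_prop) (by fun_prop) fun u hu h => by
    simp [← sub_eq_zero.1 h] at hu

theorem norm_halfPlaneToDisc_apply_le {f : ℂ → ℂ} (hf : DifferentiableOn ℂ f rightHalfPlane)
    (hfm : MapsTo f rightHalfPlane rightHalfPlane) {z ζ : ℂ} (hz : z ∈ rightHalfPlane)
    (hζ : ζ ∈ rightHalfPlane) :
    ‖halfPlaneToDisc (f ζ) (f z)‖ ≤ ‖halfPlaneToDisc ζ z‖ := by
  set g := halfPlaneToDisc (f ζ) ∘ f ∘ discToHalfPlane ζ
  have hmaps := discToHalfPlane_mapsTo hζ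
  have hg : DifferentiableOn ℂ g (Metric.ball 0 1) :=
    (differentiableOn_halfPlaneToDisc (hfm hζ)).comp
      (hf.comp (differentiableOn_discToHalfPlane ζ) hmaps) (hfm.comp hmaps)
  have hgm : MapsTo g (Metric.ball 0 1) (Metric.closedBall 0 1) :=
    ((halfPlaneToDisc_mapsTo (hfm hζ)).comp (hfm.comp hmaps)).mono_right
      Metric.ball_subset_closedBall
  have hg0 : g 0 = 0 := by simp [g, discToHalfPlane, halfPlaneToDisc]
  simpa [g, discToHalfPlane_halfPlaneToDisc hζ hz] using
    Complex.norm_le_norm_of_mapsTo_ball hg hgm hg0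
      (mem_ball_zero_iff.1 (halfPlaneToDisc_mapsTo hζ hz))

/-- `‖halfPlaneToDisc ζ z‖ ≤ k` with the denominator cleared, which makes the set convex
(a Euclidean disc when `ζ ∈ Π` and `k < 1`). -/
def pseudoHypClosedBall (ζ : ℂ) (k : ℝ) : Set ℂ := {z | ‖z - ζ‖ ≤ k * ‖z + conj ζ‖}

lemma mem_pseudoHypClosedBall_iff {ζ z : ℂ} {k : ℝ} (hζ : ζ ∈ rightHalfPlane)
    (hz : z ∈ rightHalfPlane) :
    z ∈ pseudoHypClosedBall ζ k ↔ ‖halfPlaneToDisc ζ z‖ ≤ k := by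
  rw [halfPlaneToDisc, norm_div, div_le_iff₀ (norm_pos_iff.2 (add_conj_ne_zero hz hζ))]
  rfl

lemma mem_pseudoHypClosedBall_iff_normSq {ζ z : ℂ} {k : ℝ} (hk : 0 ≤ k) :
    z ∈ pseudoHypClosedBall ζ k ↔ normSq (z - ζ) ≤ k ^ 2 * normSq (z + conj ζ) := by
  rw [pseudoHypClosedBall, mem_ofPred_eq, ← sq_le_sq₀ (norm_nonneg _) (by positivity), mul_pow,
    Complex.sq_norm, Complex.sq_norm]

lemma center_mem_pseudoHypClosedBall (ζ : ℂ) {k : ℝ} (hk : 0 ≤ k) :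
    ζ ∈ pseudoHypClosedBall ζ k := by
  simpa [pseudoHypClosedBall] using mul_nonneg hk (norm_nonneg _)

lemma isClosed_pseudoHypClosedBall (ζ : ℂ) (k : ℝ) : IsClosed (pseudoHypClosedBall ζ k) :=
  isClosed_le (by fun_prop) (by fun_prop)

lemma convex_pseudoHypClosedBall (ζ : ℂ) {k : ℝ} (hk₀ : 0 ≤ k) (hk₁ : k ≤ 1) :
    Convex ℝ (pseudoHypClosedBall ζ k) := by
  intro x hx y hy a b ha hb hab
  obtain rfl : b = 1 - a := by linarith
  rw [mem_pseudoHypClosedBall_iff_normSq hk₀] at hx hy ⊢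
  simp only [normSq_apply, add_re, add_im, sub_re, sub_im, conj_re, conj_im, real_smul,
    mul_re, mul_im, ofReal_re, ofReal_im] at hx hy ⊢
  have hk2 : 0 ≤ 1 - k ^ 2 := by nlinarith
  -- the defining quadratic form has leading coefficient `k ^ 2 - 1 ≤ 0`
  nlinarith [mul_nonneg ha (sub_nonneg.2 hx), mul_nonneg hb (sub_nonneg.2 hy),
    mul_nonneg (mul_nonneg ha hb) (mul_nonneg hk2
      (add_nonneg (sq_nonneg (x.re - y.re)) (sq_nonneg (x.im - y.im))))]

lemma div_mul_norm_le_of_mem_pseudoHypClosedBall {ζ z : ℂ} {k : ℝ} (hk : 0 ≤ k)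
    (hz : z ∈ pseudoHypClosedBall ζ k) : (1 - k) / (1 + k) * ‖ζ‖ ≤ ‖z‖ := by
  have h₁ : ‖ζ‖ ≤ ‖z‖ + ‖z - ζ‖ := by
    simpa using norm_sub_le z (z - ζ)
  have h₂ : ‖z + conj ζ‖ ≤ ‖z‖ + ‖ζ‖ := (norm_add_le _ _).trans_eq (by rw [Complex.norm_conj])
  have h₃ := hz.trans (mul_le_mul_of_nonneg_left h₂ hk)
  rw [div_mul_eq_mul_div, div_le_iff₀ (by linarith)]
  nlinarith

theorem mapsTo_pseudoHypClosedBall {f : ℂ → ℂ} (hf : DifferentiableOn ℂ f rightHalfPlane)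
    (hfm : MapsTo f rightHalfPlane rightHalfPlane) {ζ : ℂ} (hζ : ζ ∈ rightHalfPlane) (k : ℝ) :
    MapsTo f (pseudoHypClosedBall ζ k ∩ rightHalfPlane) (pseudoHypClosedBall (f ζ) k) :=
  fun _ ⟨hzk, hz⟩ => (mem_pseudoHypClosedBall_iff (hfm hζ) (hfm hz)).2 <|
    (norm_halfPlaneToDisc_apply_le hf hfm hz hζ).trans
      ((mem_pseudoHypClosedBall_iff hζ hz).1 hzk)

section SegmentAverage

variable {E F : Type*} [NormedAddCommGroup E] [NormedSpace ℝ E] [NormedAddCommGroup F]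

lemma ContinuousOn.comp_lineMap {p : E → F} {U : Set E} (hp : ContinuousOn p U)
    (hU : Convex ℝ U) {a b : E} (ha : a ∈ U) (hb : b ∈ U) :
    ContinuousOn (fun s : ℝ => p (AffineMap.lineMap a b s)) (Icc 0 1) :=
  hp.comp AffineMap.lineMap_continuous.continuousOn fun _ hs => hU.lineMap_mem ha hb hs

variable [NormedSpace ℝ F] [CompleteSpace F]

def segmentAverage (p : E → F) (a b : E) : F :=
  ∫ s in (0 : ℝ)..1, p (AffineMap.lineMap a b s)

lemma segmentAverage_mem {p : E → F} {U : Set E} {S : Set F} (hp : ContinuousOn p U)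
    (hU : Convex ℝ U) {a b : E} (ha : a ∈ U) (hb : b ∈ U) (hS : Convex ℝ S)
    (hSc : IsClosed S) (hpS : ∀ s ∈ Icc (0 : ℝ) 1, p (AffineMap.lineMap a b s) ∈ S) :
    segmentAverage p a b ∈ S := by
  have : IsProbabilityMeasure (volume.restrict (Ioc (0 : ℝ) 1)) := ⟨by simp⟩
  rw [segmentAverage, intervalIntegral.integral_of_le zero_le_one]
  exact hS.integral_mem hSc ((ae_restrict_iff' measurableSet_Ioc).2
    (.of_forall fun s hs => hpS s (Ioc_subset_Icc_self hs)))
    ((hp.comp_lineMap hU ha hb).integrableOn_Icc.mono_set Ioc_subset_Icc_self)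

lemma tendsto_segmentAverage {ι : Type*} {l : Filter ι} [l.IsCountablyGenerated] {p : E → F}
    {U : Set E} (hp : ContinuousOn p U) (hU : Convex ℝ U) {a b : ι → E}
    (hab : ∀ᶠ i in l, a i ∈ U ∧ b i ∈ U) {L : F}
    (hlim : Tendsto (fun q : ι × ℝ => p (AffineMap.lineMap (a q.1) (b q.1) q.2))
      (l ×ˢ 𝓟 (Icc 0 1)) (𝓝 L)) :
    Tendsto (fun i => segmentAverage p (a i) (b i)) l (𝓝 L) := by
  rw [← uIcc_of_le zero_le_one] at hlim
  have hunif := (tendsto_prod_principal_iff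
    (F := fun i (s : ℝ) => p (AffineMap.lineMap (a i) (b i) s))).1 hlim
  simpa [segmentAverage] using hunif.tendsto_intervalIntegral_of_continuousOn (μ := volume)
    (hab.mono fun i hi => by
      simpa only [uIcc_of_le zero_le_one] using hp.comp_lineMap hU hi.1 hi.2)

end SegmentAverage

lemma sub_eq_mul_segmentAverage {F f : ℂ → ℂ} {U : Set ℂ} (hU : Convex ℝ U)
    (hF : ∀ z ∈ U, HasDerivAt F (f z) z) (hf : ContinuousOn f U) {a b : ℂ} (ha : a ∈ U)
    (hb : b ∈ U) : F b - F a = (b - a) * segmentAverage f a b := by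
  have hderiv : ∀ s ∈ uIcc (0 : ℝ) 1, HasDerivAt (fun s : ℝ => F (AffineMap.lineMap a b s))
      (f (AffineMap.lineMap a b s) * (b - a)) s := fun s hs =>
    HasDerivAt.comp s (hF _ (hU.lineMap_mem ha hb (by rwa [uIcc_of_le zero_le_one] at hs)))
      AffineMap.hasDerivAt_lineMap
  have hint : IntervalIntegrable (fun s : ℝ => f (AffineMap.lineMap a b s) * (b - a)) volume 0 1 :=
    ((hf.comp_lineMap hU ha hb).mul continuousOn_const).intervalIntegrable_of_Icc zero_le_one
  rw [segmentAverage, mul_comm, ← intervalIntegral.integral_mul_const,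
    intervalIntegral.integral_eq_sub_of_hasDerivAt hderiv hint]
  simp

lemma IsSigmaFunction.apply_orbit {Φ : ℝ → ℂ → ℂ} {φ σ : ℂ → ℂ} (hσ : IsSigmaFunction φ σ)
    (hsg : IsContinuousSemigroupOnHalfPlane Φ φ) (hnz : ∀ w ∈ rightHalfPlane, φ w ≠ 0)
    {z : ℂ} (hz : z ∈ rightHalfPlane) {t : ℝ} (ht : 0 ≤ t) : σ (Φ t z) = σ z + t := by
  have hder : ∀ x, 0 ≤ x → HasDerivWithinAt (fun s : ℝ => σ (Φ s z) - s) 0 (Ici 0) x := by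
    intro x hx
    have hmem := hsg.mapsTo x hx hz
    have h : HasDerivWithinAt (fun s : ℝ => σ (Φ s z) - s) (1 / φ (Φ x z) * φ (Φ x z) - 1)
        (Ici 0) x := (HasDerivAt.comp_hasDerivWithinAt x (hσ.1 _ hmem) (hsg.ode z hz x hx)).sub
      (hasDerivWithinAt_id x (Ici 0)).ofReal_comp
    rwa [one_div, inv_mul_cancel₀ (hnz _ hmem), sub_self] at h
  have hconst := constant_of_has_deriv_right_zero
    (fun x hx => ((hder x hx.1).continuousWithinAt).mono fun _ hy => hy.1)
    (fun x hx => (hder x hx.1).mono (Ici_subset_Ici.2 hx.1)) t (right_mem_Icc.2 ht)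
  simp only [hsg.init z hz, ofReal_zero, sub_zero] at hconst
  linear_combination hconst

lemma sub_mul_segmentAverage_eq {Φ : ℝ → ℂ → ℂ} {φ σ : ℂ → ℂ}
    (hsg : IsContinuousSemigroupOnHalfPlane Φ φ) (hnz : ∀ w ∈ rightHalfPlane, φ w ≠ 0)
    (hσ : IsSigmaFunction φ σ) {w : ℂ} (hw : w ∈ rightHalfPlane) {t : ℝ} (ht : 0 ≤ t) :
    (Φ t w - Φ t 1) * segmentAverage (fun z => (φ z)⁻¹) (Φ t 1) (Φ t w) = σ w := by
  rw [← sub_eq_mul_segmentAverage (f := fun z => (φ z)⁻¹) convex_rightHalfPlane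
      (by simpa only [one_div] using hσ.1)
      (hsg.gen_holomorphic.continuousOn.inv₀ hnz) (hsg.mapsTo t ht one_mem_rightHalfPlane)
      (hsg.mapsTo t ht hw), hσ.apply_orbit hsg hnz hw ht,
    hσ.apply_orbit hsg hnz one_mem_rightHalfPlane ht, hσ.2]
  ring

lemma tendsto_atInftyWithin {ι : Type*} {l : Filter ι} {f : ι → ℂ} {S : Set ℂ}
    (hf : Tendsto (fun i => ‖f i‖) l atTop) (hS : ∀ᶠ i in l, f i ∈ S) :
    Tendsto f l (atInftyWithin S) :=
  tendsto_inf.2 ⟨tendsto_comap_iff.2 hf, tendsto_principal.2 hS⟩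

lemma lineMap_mem_pseudoHypClosedBall_inter {a b : ℂ} {k : ℝ} (hk₀ : 0 ≤ k) (hk₁ : k ≤ 1)
    (ha : a ∈ rightHalfPlane) (hb : b ∈ rightHalfPlane) (hab : b ∈ pseudoHypClosedBall a k)
    {s : ℝ} (hs : s ∈ Icc (0 : ℝ) 1) :
    AffineMap.lineMap a b s ∈ pseudoHypClosedBall a k ∩ rightHalfPlane :=
  ⟨(convex_pseudoHypClosedBall a hk₀ hk₁).lineMap_mem (center_mem_pseudoHypClosedBall a hk₀)
    hab hs, convex_rightHalfPlane.lineMap_mem ha hb hs⟩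

section SegmentsToInfinity

variable {ι : Type*} {l : Filter ι} {a b : ι → ℂ} {k : ℝ}

lemma tendsto_lineMap_atInftyWithin (hk₀ : 0 ≤ k) (hk₁ : k < 1)
    (hab : ∀ᶠ i in l, a i ∈ rightHalfPlane ∧ b i ∈ rightHalfPlane ∧
      b i ∈ pseudoHypClosedBall (a i) k)
    (ha : Tendsto (fun i => ‖a i‖) l atTop) :
    Tendsto (fun q : ι × ℝ => AffineMap.lineMap (a q.1) (b q.1) q.2) (l ×ˢ 𝓟 (Icc 0 1))
      (atInftyWithin rightHalfPlane) := by
  have hseg : ∀ᶠ q : ι × ℝ in l ×ˢ 𝓟 (Icc 0 1),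
      AffineMap.lineMap (a q.1) (b q.1) q.2 ∈ pseudoHypClosedBall (a q.1) k ∩ rightHalfPlane :=
    eventually_prod_principal_iff.2 <| hab.mono fun _ ⟨ha, hb, hab⟩ _ hs =>
      lineMap_mem_pseudoHypClosedBall_inter hk₀ hk₁.le ha hb hab hs
  have hc : 0 < (1 - k) / (1 + k) := div_pos (by linarith) (by linarith)
  exact tendsto_atInftyWithin (tendsto_atTop_mono' _
    (hseg.mono fun _ hq => div_mul_norm_le_of_mem_pseudoHypClosedBall hk₀ hq.1)
    ((ha.comp tendsto_fst).const_mul_atTop hc)) (hseg.mono fun _ hq => hq.2)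

lemma tendsto_segmentAverage_inv_of_ne_zero [l.IsCountablyGenerated] {φ : ℂ → ℂ} {β : ℂ}
    (hβ : β ≠ 0) (hφ : ContinuousOn φ rightHalfPlane) (hnz : ∀ z ∈ rightHalfPlane, φ z ≠ 0)
    (hrep : Tendsto (fun z => φ z - β) (atInftyWithin rightHalfPlane) (𝓝 0))
    (hab : ∀ᶠ i in l, a i ∈ rightHalfPlane ∧ b i ∈ rightHalfPlane)
    (hseg : Tendsto (fun q : ι × ℝ => AffineMap.lineMap (a q.1) (b q.1) q.2)
      (l ×ˢ 𝓟 (Icc 0 1)) (atInftyWithin rightHalfPlane)) :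
    Tendsto (fun i => segmentAverage (fun z => (φ z)⁻¹) (a i) (b i)) l (𝓝 β⁻¹) := by
  have hφ' : Tendsto φ (atInftyWithin rightHalfPlane) (𝓝 β) := by
    simpa using hrep.add_const β
  exact tendsto_segmentAverage (hφ.inv₀ hnz) convex_rightHalfPlane hab
    ((hφ'.inv₀ hβ).comp hseg)

lemma eq_const_or_re_pos {f : ℂ → ℂ} {U : Set ℂ} (hf : DifferentiableOn ℂ f U) (hU : IsOpen U)
    (hUc : IsPreconnected U) (hre : ∀ z ∈ U, 0 ≤ (f z).re) :
    (∃ c, ∀ z ∈ U, f z = c) ∨ ∀ z ∈ U, 0 < (f z).re := by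
  refine ((hf.analyticOnNhd hU).is_constant_or_isOpen hUc).imp_right fun hopen z hz => ?_
  have hsub : f '' U ⊆ interior {w : ℂ | 0 ≤ w.re} :=
    (hopen U subset_rfl hU).subset_interior_iff.2 (image_subset_iff.2 hre)
  rw [interior_setOfPred_le_re] at hsub
  exact hsub (mem_image_of_mem f hz)

lemma tendsto_norm_segmentAverage_inv_atTop {φ : ℂ → ℂ}
    (hφ : DifferentiableOn ℂ φ rightHalfPlane) (hre : ∀ z ∈ rightHalfPlane, 0 < (φ z).re)
    (hk₀ : 0 ≤ k) (hk₁ : k < 1)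
    (hab : ∀ᶠ i in l, a i ∈ rightHalfPlane ∧ b i ∈ rightHalfPlane ∧
      b i ∈ pseudoHypClosedBall (a i) k)
    (hφa : Tendsto (fun i => φ (a i)) l (𝓝 0)) :
    Tendsto (fun i => ‖segmentAverage (fun z => (φ z)⁻¹) (a i) (b i)‖) l atTop := by
  have hnz : ∀ z ∈ rightHalfPlane, φ z ≠ 0 := fun z hz h => by simpa [h] using hre z hz
  have hp : DifferentiableOn ℂ (fun z => (φ z)⁻¹) rightHalfPlane := hφ.inv hnz
  have hpm : MapsTo (fun z => (φ z)⁻¹) rightHalfPlane rightHalfPlane := fun z hz => by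
    show 0 < ((φ z)⁻¹).re
    rw [inv_re]
    exact div_pos (hre z hz) (normSq_pos.2 (hnz z hz))
  have hbound : ∀ᶠ i in l, (1 - k) / (1 + k) * ‖(φ (a i))⁻¹‖
      ≤ ‖segmentAverage (fun z => (φ z)⁻¹) (a i) (b i)‖ :=
    hab.mono fun _ ⟨ha, hb, hab⟩ => div_mul_norm_le_of_mem_pseudoHypClosedBall hk₀ <|
      segmentAverage_mem hp.continuousOn convex_rightHalfPlane ha hb
        (convex_pseudoHypClosedBall _ hk₀ hk₁.le) (isClosed_pseudoHypClosedBall _ _)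
        fun _ hs => mapsTo_pseudoHypClosedBall hp hpm ha k
          (lineMap_mem_pseudoHypClosedBall_inter hk₀ hk₁.le ha hb hab hs)
  have hinv : Tendsto (fun i => ‖(φ (a i))⁻¹‖) l atTop :=
    tendsto_norm_inv_nhdsNE_zero_atTop.comp
      (tendsto_nhdsWithin_iff.2 ⟨hφa, hab.mono fun _ hi => hnz _ hi.1⟩)
  exact tendsto_atTop_mono' l hbound
    (hinv.const_mul_atTop (div_pos (by linarith) (by linarith)))

lemma tendsto_inv_segmentAverage [l.NeBot] [l.IsCountablyGenerated] {φ : ℂ → ℂ} {β : ℂ}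
    (hφ : DifferentiableOn ℂ φ rightHalfPlane) (hre : ∀ z ∈ rightHalfPlane, 0 ≤ (φ z).re)
    (hnz : ∀ z ∈ rightHalfPlane, φ z ≠ 0)
    (hrep : Tendsto (fun z => φ z - β) (atInftyWithin rightHalfPlane) (𝓝 0))
    (hk₀ : 0 ≤ k) (hk₁ : k < 1)
    (hab : ∀ᶠ i in l, a i ∈ rightHalfPlane ∧ b i ∈ rightHalfPlane ∧
      b i ∈ pseudoHypClosedBall (a i) k)
    (ha : Tendsto (fun i => ‖a i‖) l atTop) :
    (∀ᶠ i in l, segmentAverage (fun z => (φ z)⁻¹) (a i) (b i) ≠ 0) ∧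
      Tendsto (fun i => (segmentAverage (fun z => (φ z)⁻¹) (a i) (b i))⁻¹) l (𝓝 β) := by
  rcases eq_or_ne β 0 with rfl | hβ
  · have hφa : Tendsto (fun i => φ (a i)) l (𝓝 0) := by
      simpa [Function.comp_def] using
        hrep.comp (tendsto_atInftyWithin ha (hab.mono fun _ hi => hi.1))
    have hpos : ∀ z ∈ rightHalfPlane, 0 < (φ z).re := by
      refine (eq_const_or_re_pos hφ isOpen_rightHalfPlane
        convex_rightHalfPlane.isPreconnected hre).resolve_left ?_
      rintro ⟨c, hc⟩
      have hc0 : c = 0 :=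
        tendsto_const_nhds_iff.1 (hφa.congr' (hab.mono fun _ hi => hc _ hi.1))
      exact hnz 1 one_mem_rightHalfPlane (hc0 ▸ hc 1 one_mem_rightHalfPlane)
    have hI := tendsto_norm_segmentAverage_inv_atTop hφ hpos hk₀ hk₁ hab hφa
    refine ⟨(hI.eventually_gt_atTop 0).mono fun _ hi => norm_pos_iff.1 hi, ?_⟩
    exact tendsto_zero_iff_norm_tendsto_zero.2
      (hI.inv_tendsto_atTop.congr fun _ => (norm_inv _).symm)
  · have hI := tendsto_segmentAverage_inv_of_ne_zero hβ hφ.continuousOn hnz hrep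
      (hab.mono fun _ hi => ⟨hi.1, hi.2.1⟩) (tendsto_lineMap_atInftyWithin hk₀ hk₁ hab ha)
    exact ⟨hI.eventually_ne (inv_ne_zero hβ), by simpa using hI.inv₀ (inv_ne_zero hβ)⟩

end SegmentsToInfinity

theorem stmt13 (Φ : ℝ → ℂ → ℂ) (φ σ : ℂ → ℂ) (β : ℂ)
    (hsg : IsContinuousSemigroupOnHalfPlane Φ φ)
    (hdw : HasDWPointInfty Φ)
    (hnz : ∀ w ∈ rightHalfPlane, φ w ≠ 0)
    (hrep : Tendsto (fun w : ℂ => φ w - β) (atInftyWithin rightHalfPlane) (𝓝 0))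
    (hσ : IsSigmaFunction φ σ) :
    ∀ w ∈ rightHalfPlane,
      Tendsto (fun t : ℝ => Φ t w - Φ t 1) atTop (𝓝 (β * σ w)) := by
  intro w hw
  have hone := one_mem_rightHalfPlane
  have hev : ∀ᶠ t in atTop, Φ t 1 ∈ rightHalfPlane ∧ Φ t w ∈ rightHalfPlane ∧
      Φ t w ∈ pseudoHypClosedBall (Φ t 1) ‖halfPlaneToDisc 1 w‖ := by
    filter_upwards [eventually_ge_atTop 0] with t ht
    exact ⟨hsg.mapsTo t ht hone, hsg.mapsTo t ht hw,
      mapsTo_pseudoHypClosedBall (hsg.holomorphic t ht) (hsg.mapsTo t ht) hone _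
        ⟨(mem_pseudoHypClosedBall_iff hone hw).2 le_rfl, hw⟩⟩
  obtain ⟨hne, hlim⟩ := tendsto_inv_segmentAverage hsg.gen_holomorphic hsg.gen_re_nonneg hnz hrep
    (norm_nonneg _) (mem_ball_zero_iff.1 (halfPlaneToDisc_mapsTo hone hw)) hev (hdw 1 hone)
  rw [mul_comm β]
  refine (tendsto_const_nhds.mul hlim).congr' ?_
  filter_upwards [hne, eventually_ge_atTop 0] with t hI ht
  rw [← sub_mul_segmentAverage_eq hsg hnz hσ hw ht, mul_inv_cancel_right₀ hI]
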